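/- For the factorized Bernoulli q_i tilted by the squared score, q_i(z) ∝ p_θ(z)·(∂log p_θ(z)/∂θ_i)², the coordinates remain independent with z_j ~ Ber(θ_j) for j ≠ i and z_i ~ Ber(1−θ_i). -/

import Mathlib

/-!
Write `w_j(b)` for the Bernoulli weight `θ_j` or `1 - θ_j`. Since `p_θ(z) = ∏_j w_j(z_j)` and
only the `i`-th factor depends on `θ_i`, the score is `w_i'(z_i) / w_i(z_i) = ±1 / w_i(z_i)`.
Hence `p_θ(z) · score(z)²` is again a product of one-coordinate weights, with `w_i` replaced by
`1 / w_i`. Normalizing a product weight normalizes each factor separately, and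
`(1/θ, 1/(1-θ))` normalizes to `(1 - θ, θ)`.
-/

open Finset Real

theorem prod_div_sum_prod {ι κ K : Type*} [Fintype ι] [DecidableEq ι] [Fintype κ] [Semifield K]
    (v : ι → κ → K) (z : ι → κ) :
    (∏ j, v j (z j)) / ∑ z' : ι → κ, ∏ j, v j (z' j) = ∏ j, v j (z j) / ∑ b, v j b := by
  rw [← Fintype.prod_sum, prod_div_distrib]

def bernoulliWeight (p : ℝ) (b : Bool) : ℝ := if b then p else 1 - p

theorem hasDerivAt_bernoulliWeight (b : Bool) (x : ℝ) :
    HasDerivAt (fun t => bernoulliWeight t b) (if b then 1 else -1) x := by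
  cases b
  · simpa [bernoulliWeight] using (hasDerivAt_id x).const_sub 1
  · simpa [bernoulliWeight] using hasDerivAt_id' x

theorem sum_bernoulliWeight (p : ℝ) : ∑ b, bernoulliWeight p b = 1 := by
  simp [bernoulliWeight]

theorem inv_bernoulliWeight_div_sum {p : ℝ} (h₀ : p ≠ 0) (h₁ : p ≠ 1) (b : Bool) :
    (bernoulliWeight p b)⁻¹ / ∑ b', (bernoulliWeight p b')⁻¹ = if b then 1 - p else p := by
  have h₁' : 1 - p ≠ 0 := sub_ne_zero.2 h₁.symm
  cases b <;> simp [bernoulliWeight] <;> field_simp <;> ring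

section Product

variable {ι : Type*} [Fintype ι] [DecidableEq ι]

def bernoulliProd (θ : ι → ℝ) (z : ι → Bool) : ℝ := ∏ j, bernoulliWeight (θ j) (z j)

/-- The weights of `p_θ(z) · (∂ log p_θ(z) / ∂θ_i)²`: the `i`-th Bernoulli weight is inverted. -/
noncomputable def scoreTiltedWeight (θ : ι → ℝ) (i j : ι) (b : Bool) : ℝ :=
  if j = i then (bernoulliWeight (θ i) b)⁻¹ else bernoulliWeight (θ j) b

theorem bernoulliProd_update (θ : ι → ℝ) (i : ι) (t : ℝ) (z : ι → Bool) :
    bernoulliProd (Function.update θ i t) z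
      = bernoulliWeight t (z i) * ∏ j ∈ univ.erase i, bernoulliWeight (θ j) (z j) := by
  rw [bernoulliProd, ← mul_prod_erase _ _ (mem_univ i), Function.update_self]
  congr 1
  exact prod_congr rfl fun j hj => by rw [Function.update_of_ne (ne_of_mem_erase hj)]

theorem prod_scoreTiltedWeight (θ : ι → ℝ) (i : ι) (z : ι → Bool) :
    ∏ j, scoreTiltedWeight θ i j (z j)
      = (bernoulliWeight (θ i) (z i))⁻¹ * ∏ j ∈ univ.erase i, bernoulliWeight (θ j) (z j) := by
  rw [← mul_prod_erase _ _ (mem_univ i), scoreTiltedWeight, if_pos rfl]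
  congr 1
  exact prod_congr rfl fun j hj => if_neg (ne_of_mem_erase hj)

theorem hasDerivAt_log_bernoulliWeight_mul (b : Bool) {C x : ℝ} (hC : C ≠ 0)
    (hx : bernoulliWeight x b ≠ 0) :
    HasDerivAt (fun t => log (bernoulliWeight t b * C))
      ((if b then 1 else -1) / bernoulliWeight x b) x := by
  have h := ((hasDerivAt_bernoulliWeight b x).mul_const C).log (mul_ne_zero hx hC)
  rwa [mul_div_mul_right _ _ hC] at h

/-- Where `p_θ(z) = 0` both sides vanish, the right one through `0⁻¹ = 0`. -/
theorem bernoulliProd_mul_sq_deriv_log (θ : ι → ℝ) (i : ι) (z : ι → Bool) :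
    bernoulliProd θ z * deriv (fun t => log (bernoulliProd (Function.update θ i t) z)) (θ i) ^ 2
      = ∏ j, scoreTiltedWeight θ i j (z j) := by
  have hθ := bernoulliProd_update θ i (θ i) z
  rw [Function.update_eq_self] at hθ
  simp only [bernoulliProd_update, hθ, prod_scoreTiltedWeight]
  generalize hR : ∏ j ∈ univ.erase i, bernoulliWeight (θ j) (z j) = R
  by_cases hwR : bernoulliWeight (θ i) (z i) * R = 0
  · rcases mul_eq_zero.1 hwR with h | h <;> simp [h]
  obtain ⟨hw, hR⟩ := mul_ne_zero_iff.1 hwR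
  rw [(hasDerivAt_log_bernoulliWeight_mul (z i) hR hw).deriv]
  have hsign : (if z i then 1 else -1 : ℝ) ^ 2 = 1 := by cases z i <;> norm_num
  rw [div_pow, hsign]
  field_simp

end Product

/-- For the factorized Bernoulli distribution tilted by the squared score of coordinate `i`,
`q_i(z) ∝ p_θ(z)·(∂ log p_θ(z)/∂θ_i)²`, the coordinates remain independent with
`z_j ~ Ber(θ_j)` for `j ≠ i` and `z_i ~ Ber(1 − θ_i)`. -/
theorem tilted_bernoulli_flips_marginal (d : ℕ) (θ : Fin d → ℝ)
    (hθ : ∀ j, θ j ∈ Set.Ioo (0 : ℝ) 1) (i : Fin d) :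
    let P : (Fin d → ℝ) → (Fin d → Bool) → ℝ := fun t z => ∏ j, if z j then t j else 1 - t j
    let score : (Fin d → Bool) → ℝ :=
      fun z => deriv (fun t => Real.log (P (Function.update θ i t) z)) (θ i)
    ∀ z : Fin d → Bool,
      P θ z * (score z) ^ 2 / (∑ z' : Fin d → Bool, P θ z' * (score z') ^ 2)
        = ∏ j, if j = i then (if z j then 1 - θ j else θ j)
               else (if z j then θ j else 1 - θ j) := by
  intro P score z
  obtain ⟨hθ₀, hθ₁⟩ := hθ i
  have htilt : ∀ z', P θ z' * score z' ^ 2 = ∏ j, scoreTiltedWeight θ i j (z' j) :=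
    bernoulliProd_mul_sq_deriv_log θ i
  rw [htilt, Fintype.sum_congr _ _ htilt, prod_div_sum_prod]
  refine Fintype.prod_congr _ _ fun j => ?_
  by_cases hj : j = i
  · subst hj
    simpa [scoreTiltedWeight] using
      inv_bernoulliWeight_div_sum hθ₀.ne' hθ₁.ne (z j)
  · simp only [scoreTiltedWeight, if_neg hj, sum_bernoulliWeight, div_one]
    rfl
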